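/- Let G be an abelian lattice-ordered group, u > 0, and y, z, z' in [0,u]. If (u - y) ∧ z = 0 and (u - z) ∧ z' = 0, then (u - y) ∧ z' = 0. -/

import Mathlib

/-!
Put `x = (u - y) ⊓ z'`. Then `0 ≤ x`, and `x` is disjoint from `z` (as `x ≤ u - y`) and from
`u - z` (as `x ≤ z'`). In an abelian ℓ-group the elements disjoint from `x` are closed under
addition, so `x` is disjoint from `z + (u - z) = u`; since `x ≤ u`, this forces `x = 0`.
-/

lemma inf_eq_zero_of_le {α : Type*} [Lattice α] [Zero α] {a b c : α} (hab : a ⊓ b = 0)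
    (hc : 0 ≤ c) (hca : c ≤ a) : c ⊓ b = 0 :=
  le_antisymm (hab ▸ inf_le_inf_right b hca) (le_inf hc (hab ▸ inf_le_right))

section DisjointInLatticeOrderedAddCommGroup

variable {G : Type*} [Lattice G] [AddCommGroup G] [AddLeftMono G] {a b c : G}

lemma inf_add_le_inf_add_inf (ha : 0 ≤ a) (hb : 0 ≤ b) (hc : 0 ≤ c) :
    a ⊓ (b + c) ≤ a ⊓ b + a ⊓ c := by
  rw [add_inf, inf_add, inf_add, inf_inf_inf_comm]
  refine le_inf (le_inf ?_ ?_) (le_inf ?_ inf_le_right) <;> refine inf_le_left.trans ?_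
  · exact le_add_of_nonneg_left ha
  · exact le_add_of_nonneg_right hc
  · exact le_add_of_nonneg_left hb

lemma inf_add_eq_zero (hab : a ⊓ b = 0) (hac : a ⊓ c = 0) : a ⊓ (b + c) = 0 := by
  have hb : 0 ≤ b := hab ▸ inf_le_right
  have hc : 0 ≤ c := hac ▸ inf_le_right
  have ha : 0 ≤ a := hab ▸ inf_le_left
  refine le_antisymm ?_ (le_inf ha (add_nonneg hb hc))
  simpa [hab, hac] using inf_add_le_inf_add_inf ha hb hc

end DisjointInLatticeOrderedAddCommGroup

theorem stmt4_general {G : Type*} [Lattice G] [AddCommGroup G]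
    [CovariantClass G G (· + ·) (· ≤ ·)]
    (u : G) (y z z' : G)
    (hy : y ∈ Set.Icc (0 : G) u)
    (h1 : (u - y) ⊓ z = 0) (h2 : (u - z) ⊓ z' = 0) :
    (u - y) ⊓ z' = 0 := by
  set x := (u - y) ⊓ z'
  have hx0 : 0 ≤ x := le_inf (h1 ▸ inf_le_left) (h2 ▸ inf_le_right)
  have hxz : x ⊓ z = 0 := inf_eq_zero_of_le h1 hx0 inf_le_left
  have hxuz : x ⊓ (u - z) = 0 := inf_eq_zero_of_le (inf_comm (u - z) z' ▸ h2) hx0 inf_le_right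
  have hxu : x ⊓ u = 0 := by simpa using inf_add_eq_zero hxz hxuz
  rwa [inf_eq_left.2 (inf_le_left.trans (sub_le_self u hy.1))] at hxu

/-- In an abelian ℓ-group, if `(u - y) ⊓ z = 0` and `(u - z) ⊓ z' = 0`, then
`(u - y) ⊓ z' = 0`, for `y, z, z' ∈ [0,u]`. -/
theorem stmt4 {G : Type*} [Lattice G] [AddCommGroup G]
    [CovariantClass G G (· + ·) (· ≤ ·)]
    (u : G) (hu : 0 < u) (y z z' : G)
    (hy : y ∈ Set.Icc (0 : G) u) (hz : z ∈ Set.Icc (0 : G) u)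
    (hz' : z' ∈ Set.Icc (0 : G) u)
    (h1 : (u - y) ⊓ z = 0) (h2 : (u - z) ⊓ z' = 0) :
    (u - y) ⊓ z' = 0 :=
  stmt4_general u y z z' hy h1 h2
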